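/- Let F be a finite field and V an n-dimensional vector space over F with basis B = {v_1, …, v_n}, and let t = (|F|-1)^n. For any choice of the linear orders ≤_I used to construct the lattice 𝕃, the nonzero component union graph UG(V) is isomorphic to the graph join G(𝕃^∂) ∨ K_t, where 𝕃^∂ is the order-dual lattice of 𝕃 and G(𝕃^∂) is its zero-divisor graph. -/

import Mathlib

/-- The skeleton (support) of a vector with respect to a basis. -/
def skel {F V : Type*} [Field F] [AddCommGroup V] [Module F V] {n : ℕ}
    (B : Module.Basis (Fin n) F V) (a : V) : Set (Fin n) := {i | B.repr a i ≠ 0}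

/-- Vectors with proper nonempty skeleton: the middle elements of the lattice 𝕃. -/
def Lmid {F V : Type*} [Field F] [AddCommGroup V] [Module F V] {n : ℕ}
    (B : Module.Basis (Fin n) F V) : Type _ :=
  {a : V // skel B a ≠ ∅ ∧ skel B a ≠ Set.univ}

/-- Carrier of the lattice 𝕃 constructed from `V`: a bottom element `none`
(the 0 of 𝕃), a top element `some none` (the 1 of 𝕃), and the middle elements
`some (some x)` which are the vectors with proper nonempty skeleton. -/
abbrev Lcar {F V : Type*} [Field F] [AddCommGroup V] [Module F V] {n : ℕ}
    (B : Module.Basis (Fin n) F V) : Type _ := Option (Option (Lmid B))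

/-- The order of the lattice 𝕃, parameterized by the chosen family `lo` of linear
orders on each part `V_I`: `0` is least, `1` is greatest, and for `x ∈ V_I`,
`y ∈ V_J`, `x ≤ y` iff `I ⊊ J`, or `I = J` and `x ≤_I y`. -/
def Lle {F V : Type*} [Field F] [AddCommGroup V] [Module F V] {n : ℕ}
    (B : Module.Basis (Fin n) F V)
    (lo : ∀ I : Set (Fin n), {a : V // skel B a = I} → {a : V // skel B a = I} → Prop) :
    Lcar B → Lcar B → Prop
  | none, _ => True
  | some _, none => False
  | some none, some y => y = none
  | some (some _), some none => True
  | some (some x), some (some y) =>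
      skel B x.1 ⊂ skel B y.1 ∨
        ∃ h : skel B x.1 = skel B y.1, lo (skel B x.1) ⟨x.1, rfl⟩ ⟨y.1, h.symm⟩

/-- The zero-divisor graph of a set with a binary relation `le` and a distinguished
least element `b0`: vertices are the elements `a ≠ b0` for which there is some
`b ≠ b0` with lower cone `{a,b}^ℓ = {b0}`; distinct vertices `a, b` are adjacent
iff `{a,b}^ℓ = {b0}`. -/
def relZDG {α : Type*} (le : α → α → Prop) (b0 : α) :
    SimpleGraph {a : α // a ≠ b0 ∧ ∃ b, b ≠ b0 ∧ ∀ c, le c a → le c b → c = b0} where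
  Adj x y := x ≠ y ∧ ∀ c, le c x.1 → le c y.1 → c = b0
  symm := ⟨by
    rintro x y ⟨h1, h2⟩
    exact ⟨h1.symm, fun c ha hb => h2 c hb ha⟩⟩
  loopless := ⟨fun x h => h.1 rfl⟩

/-- The join of two graphs: disjoint union together with all cross edges. -/
def graphJoin {α β : Type*} (G : SimpleGraph α) (H : SimpleGraph β) :
    SimpleGraph (α ⊕ β) where
  Adj x y :=
    match x, y with
    | Sum.inl a, Sum.inl b => G.Adj a b
    | Sum.inr a, Sum.inr b => H.Adj a b
    | _, _ => True
  symm := ⟨by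
    rintro (a|a) (b|b) h
    · exact h.symm
    · trivial
    · trivial
    · exact h.symm⟩
  loopless := ⟨by
    rintro (a|a) h
    · exact G.loopless.irrefl a h
    · exact H.loopless.irrefl a h⟩

/-- The nonzero component union graph UG(V) with respect to a basis. -/
def compUnionGraph {F V : Type*} [Field F] [AddCommGroup V] [Module F V] {n : ℕ}
    (B : Module.Basis (Fin n) F V) : SimpleGraph {a : V // a ≠ 0} where
  Adj a b := a ≠ b ∧ skel B a.1 ∪ skel B b.1 = Set.univ
  symm := ⟨by
    rintro a b ⟨hne, h⟩
    exact ⟨hne.symm, by rwa [Set.union_comm]⟩⟩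
  loopless := ⟨fun a h => h.1 rfl⟩

section Aux
open scoped Classical

variable {F V : Type*} [Field F] [AddCommGroup V] [Module F V] {n : ℕ}

theorem skel_zero (B : Module.Basis (Fin n) F V) : skel B (0 : V) = ∅ := by
  ext i; simp [skel]

theorem skel_eq_empty_iff (B : Module.Basis (Fin n) F V) (a : V) : skel B a = ∅ ↔ a = 0 := by
  constructor
  · intro h
    have h2 : B.repr a = 0 := by
      ext i
      have := Set.eq_empty_iff_forall_notMem.mp h i
      simpa [skel] using this
    have := congrArg B.repr.symm h2
    simpa using this
  · rintro rfl; exact skel_zero B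

theorem ne_zero_of_mid (B : Module.Basis (Fin n) F V) (x : Lmid B) : x.1 ≠ 0 :=
  fun h0 => x.2.1 (by rw [h0]; exact skel_zero B)

theorem exists_skel (B : Module.Basis (Fin n) F V) (I : Set (Fin n)) : ∃ a : V, skel B a = I := by
  classical
  refine ⟨B.repr.symm (Finsupp.equivFunOnFinite.symm fun i => if i ∈ I then (1:F) else 0), ?_⟩
  ext i
  simp [skel]

theorem card_aux [Fintype F] : Fintype.card (Fin n → {x : F // x ≠ 0}) = (Fintype.card F - 1) ^ n := by
  classical
  rw [Fintype.card_fun, Fintype.card_fin]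
  congr 1
  rw [Fintype.card_subtype_compl, Fintype.card_subtype_eq]

noncomputable def fullEquiv (B : Module.Basis (Fin n) F V) :
    {a : V // skel B a = Set.univ} ≃ (Fin n → {x : F // x ≠ 0}) where
  toFun a i := ⟨B.repr a.1 i, by
    have : i ∈ skel B a.1 := by rw [a.2]; trivial
    exact this⟩
  invFun f := ⟨B.repr.symm (Finsupp.equivFunOnFinite.symm fun i => (f i).1), by
    ext i
    simp only [skel, Set.mem_setOf_eq, Set.mem_univ, iff_true, LinearEquiv.apply_symm_apply,
      Finsupp.coe_equivFunOnFinite_symm]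
    exact (f i).2⟩
  left_inv a := by
    apply Subtype.ext
    show B.repr.symm (Finsupp.equivFunOnFinite.symm fun i => B.repr a.1 i) = a.1
    rw [show (fun i => B.repr a.1 i) = ⇑(B.repr a.1) from rfl,
      Finsupp.equivFunOnFinite_symm_coe]
    exact B.repr.symm_apply_apply a.1
  right_inv f := by
    funext i; apply Subtype.ext
    show B.repr (B.repr.symm (Finsupp.equivFunOnFinite.symm fun j => (f j).1)) i = (f i).1
    simp

end Aux
section Aux2
variable {F V : Type*} [Field F] [AddCommGroup V] [Module F V] {n : ℕ}
variable (B : Module.Basis (Fin n) F V)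
variable (lo : ∀ I : Set (Fin n), {a : V // skel B a = I} → {a : V // skel B a = I} → Prop)

theorem Lle_refl
    (hlo : ∀ I : Set (Fin n), I ≠ ∅ → I ≠ Set.univ →
      IsLinearOrder {a : V // skel B a = I} (lo I)) :
    ∀ x : Lcar B, Lle B lo x x
  | none => trivial
  | some none => rfl
  | some (some x) => by
      refine Or.inr ⟨rfl, ?_⟩
      haveI := hlo (skel B x.1) x.2.1 x.2.2
      exact refl_of (lo (skel B x.1)) _

theorem lo_congr {I J : Set (Fin n)} (h : I = J)
    {a b : V} (ha : skel B a = I) (hb : skel B b = I) (ha' : skel B a = J) (hb' : skel B b = J)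
    (hl : lo I ⟨a, ha⟩ ⟨b, hb⟩) : lo J ⟨a, ha'⟩ ⟨b, hb'⟩ := by
  subst h; exact hl

theorem skel_subset_of_Lle {x y : Lmid B}
    (h : Lle B lo (some (some x)) (some (some y))) : skel B x.1 ⊆ skel B y.1 := by
  rcases h with h | ⟨h, -⟩
  · exact h.subset
  · exact h.subset

theorem cone_iff
    (hlo : ∀ I : Set (Fin n), I ≠ ∅ → I ≠ Set.univ →
      IsLinearOrder {a : V // skel B a = I} (lo I)) (x y : Lmid B) :
    (∀ c : Lcar B, Lle B lo (some (some x)) c → Lle B lo (some (some y)) c →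
        c = some none) ↔ skel B x.1 ∪ skel B y.1 = Set.univ := by
  constructor
  · intro h
    by_contra hu
    obtain ⟨c, hc, h1, h2⟩ : ∃ c : Lcar B, c ≠ some none ∧
        Lle B lo (some (some x)) c ∧ Lle B lo (some (some y)) c := by
      by_cases hxy : skel B x.1 = skel B y.1
      · rcases (hlo (skel B x.1) x.2.1 x.2.2).total ⟨x.1, rfl⟩ ⟨y.1, hxy.symm⟩ with ht | ht
        · exact ⟨some (some y), by simp, Or.inr ⟨hxy, ht⟩, Lle_refl B lo hlo _⟩
        · exact ⟨some (some x), by simp, Lle_refl B lo hlo _,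
            Or.inr ⟨hxy.symm, lo_congr B lo hxy hxy.symm rfl rfl hxy ht⟩⟩
      · by_cases hyx : skel B y.1 ⊆ skel B x.1
        · exact ⟨some (some x), by simp, Lle_refl B lo hlo _,
            Or.inl (hyx.ssubset_of_ne (fun e => hxy e.symm))⟩
        · by_cases hxy2 : skel B x.1 ⊆ skel B y.1
          · exact ⟨some (some y), by simp, Or.inl (hxy2.ssubset_of_ne hxy),
              Lle_refl B lo hlo _⟩
          · obtain ⟨z, hz⟩ := exists_skel B (skel B x.1 ∪ skel B y.1)
            have hz1 : skel B z ≠ ∅ := by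
              rw [hz]; intro e
              exact x.2.1 (Set.union_empty_iff.mp e).1
            have hz2 : skel B z ≠ Set.univ := by rw [hz]; exact hu
            refine ⟨some (some ⟨z, hz1, hz2⟩), by simp, Or.inl ?_, Or.inl ?_⟩
            · show skel B x.1 ⊂ skel B z
              rw [hz]
              refine Set.subset_union_left.ssubset_of_ne (fun e => hyx ?_)
              rw [e]; exact Set.subset_union_right
            · show skel B y.1 ⊂ skel B z
              rw [hz]
              refine Set.subset_union_right.ssubset_of_ne (fun e => hxy2 ?_)
              rw [e]; exact Set.subset_union_left
    exact hc (h c h1 h2)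
  · intro hu c h1 h2
    match c with
    | none => exact (h1 : False).elim
    | some none => rfl
    | some (some z) =>
      exfalso
      apply z.2.2
      have hsub : skel B x.1 ∪ skel B y.1 ⊆ skel B z.1 :=
        Set.union_subset (skel_subset_of_Lle B lo h1) (skel_subset_of_Lle B lo h2)
      rw [hu] at hsub
      exact Set.eq_univ_of_univ_subset hsub

theorem vertex_iff
    (hlo : ∀ I : Set (Fin n), I ≠ ∅ → I ≠ Set.univ →
      IsLinearOrder {a : V // skel B a = I} (lo I)) (a : Lcar B) :
    (a ≠ some none ∧ ∃ b, b ≠ (some none : Lcar B) ∧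
        ∀ c, Lle B lo a c → Lle B lo b c → c = some none) ↔
      ∃ x : Lmid B, a = some (some x) := by
  constructor
  · rintro ⟨h1, b, hb, hcone⟩
    match a, h1 with
    | none, h1 => exact absurd (hcone b trivial (Lle_refl B lo hlo b)) hb
    | some none, h1 => exact absurd rfl h1
    | some (some x), h1 => exact ⟨x, rfl⟩
  · rintro ⟨x, rfl⟩
    refine ⟨by simp, ?_⟩
    obtain ⟨z, hz⟩ := exists_skel B (skel B x.1)ᶜ
    have hz1 : skel B z ≠ ∅ := by
      rw [hz]; simpa [Set.compl_empty_iff] using x.2.2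
    have hz2 : skel B z ≠ Set.univ := by
      rw [hz]; simpa [Set.compl_univ_iff] using x.2.1
    refine ⟨some (some ⟨z, hz1, hz2⟩), by simp, ?_⟩
    refine (cone_iff B lo hlo x ⟨z, hz1, hz2⟩).mpr ?_
    show skel B x.1 ∪ skel B z = Set.univ
    rw [hz]; exact Set.union_compl_self _

end Aux2
section Aux3
open scoped Classical
variable {F V : Type*} [Field F] [Fintype F] [AddCommGroup V] [Module F V] {n : ℕ}
variable (B : Module.Basis (Fin n) F V)
variable (lo : ∀ I : Set (Fin n), {a : V // skel B a = I} → {a : V // skel B a = I} → Prop)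

/-- vertex type of the zero divisor graph of the dual lattice -/
abbrev ZVert : Type _ :=
  {a : Lcar B // a ≠ some none ∧ ∃ b, b ≠ (some none : Lcar B) ∧
      ∀ c, Lle B lo a c → Lle B lo b c → c = some none}

noncomputable def e2 : {a : V // skel B a = Set.univ} ≃ Fin ((Fintype.card F - 1) ^ n) :=
  (fullEquiv B).trans (Fintype.equivFinOfCardEq card_aux)

variable (hlo : ∀ I : Set (Fin n), I ≠ ∅ → I ≠ Set.univ →
      IsLinearOrder {a : V // skel B a = I} (lo I))

noncomputable def toF : {a : V // a ≠ 0} → ZVert B lo ⊕ Fin ((Fintype.card F - 1) ^ n) :=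
  fun a =>
    if h : skel B a.1 = Set.univ then Sum.inr (e2 B ⟨a.1, h⟩)
    else Sum.inl ⟨some (some ⟨a.1, fun h0 => a.2 ((skel_eq_empty_iff B a.1).mp h0), h⟩),
      (vertex_iff B lo hlo _).mpr ⟨_, rfl⟩⟩

noncomputable def invF (hn : 1 ≤ n) : ZVert B lo ⊕ Fin ((Fintype.card F - 1) ^ n) → {a : V // a ≠ 0} :=
  fun y =>
    match y with
    | Sum.inr k => ⟨((e2 B).symm k).1, fun h0 => by
        haveI : Nonempty (Fin n) := ⟨⟨0, hn⟩⟩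
        have h2 := ((e2 B).symm k).2
        rw [h0, skel_zero] at h2
        exact Set.empty_ne_univ h2⟩
    | Sum.inl ⟨some (some x), _⟩ => ⟨x.1, ne_zero_of_mid B x⟩
    | Sum.inl ⟨some none, h⟩ => absurd rfl h.1
    | Sum.inl ⟨none, h⟩ =>
        absurd (h.2.choose_spec.2 h.2.choose trivial (Lle_refl B lo hlo _)) h.2.choose_spec.1

theorem left_inv (hn : 1 ≤ n) : Function.LeftInverse (invF B lo hlo hn) (toF B lo hlo) := by
  intro a
  by_cases h : skel B a.1 = Set.univ
  · rw [toF, dif_pos h]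
    simp only [invF]
    have h2 := congrArg Subtype.val ((e2 B).symm_apply_apply ⟨a.1, h⟩)
    exact Subtype.ext h2
  · rw [toF, dif_neg h]
    simp only [invF]

theorem right_inv (hn : 1 ≤ n) : Function.RightInverse (invF B lo hlo hn) (toF B lo hlo) := by
  rintro (⟨y, hy⟩ | k)
  · match y, hy with
    | some (some x), hy =>
      simp only [invF]
      rw [toF, dif_neg x.2.2]
      rfl
    | some none, hy => exact absurd rfl hy.1
    | none, hy =>
      exact absurd (hy.2.choose_spec.2 hy.2.choose trivial (Lle_refl B lo hlo _))
        hy.2.choose_spec.1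
  · simp only [invF]
    rw [toF, dif_pos ((e2 B).symm k).2]
    congr 1
    have : (⟨((e2 B).symm k).1, ((e2 B).symm k).2⟩ : {a : V // skel B a = Set.univ}) =
        (e2 B).symm k := rfl
    rw [this]
    exact (e2 B).apply_symm_apply k

end Aux3
/-- For any choice of the linear orders `≤_I` used to construct the
lattice 𝕃, the nonzero component union graph `UG(V)` is isomorphic to the join
`G(𝕃^∂) ∨ K_t`, where `t = (|F|-1)^n`, `𝕃^∂` is the order-dual of 𝕃 (whose order
is `fun x y => Lle B lo y x`, and whose least element is the top `some none` of 𝕃)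
and `G(𝕃^∂)` is its zero-divisor graph. -/
theorem stmt2 {F V : Type*} [Field F] [Fintype F] [AddCommGroup V] [Module F V]
    {n : ℕ} (hn : 1 ≤ n) (B : Module.Basis (Fin n) F V)
    (lo : ∀ I : Set (Fin n), {a : V // skel B a = I} → {a : V // skel B a = I} → Prop)
    (hlo : ∀ I : Set (Fin n), I ≠ ∅ → I ≠ Set.univ →
      IsLinearOrder {a : V // skel B a = I} (lo I)) :
    Nonempty (compUnionGraph B ≃g
      graphJoin (relZDG (fun x y => Lle B lo y x) (some none : Lcar B))
        (⊤ : SimpleGraph (Fin ((Fintype.card F - 1) ^ n)))) := by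
  refine ⟨⟨⟨toF B lo hlo, invF B lo hlo hn, left_inv B lo hlo hn, right_inv B lo hlo hn⟩, ?_⟩⟩
  intro a b
  simp only [Equiv.coe_fn_mk]
  by_cases ha : skel B a.1 = Set.univ <;> by_cases hb : skel B b.1 = Set.univ
  · simp only [toF, dif_pos ha, dif_pos hb]
    constructor
    · intro hne
      have hne' : (e2 B) ⟨a.1, ha⟩ ≠ (e2 B) ⟨b.1, hb⟩ := hne
      refine ⟨fun e => hne' ?_, by rw [ha]; exact Set.univ_union _⟩
      have hv : a.1 = b.1 := congrArg Subtype.val e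
      rw [show (⟨a.1, ha⟩ : {a : V // skel B a = Set.univ}) = ⟨b.1, hb⟩ from
        Subtype.ext hv]
    · rintro ⟨hne, -⟩
      have : (⟨a.1, ha⟩ : {a : V // skel B a = Set.univ}) ≠ ⟨b.1, hb⟩ := by
        intro e
        have hv : a.1 = b.1 := congrArg (fun s : {a : V // skel B a = Set.univ} => s.1) e
        exact hne (Subtype.ext hv)
      exact (e2 B).injective.ne this
  · simp only [toF, dif_pos ha, dif_neg hb]
    constructor
    · intro _
      refine ⟨fun e => hb ?_, by rw [ha]; exact Set.univ_union _⟩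
      rw [← e]; exact ha
    · intro _; trivial
  · simp only [toF, dif_neg ha, dif_pos hb]
    constructor
    · intro _
      refine ⟨fun e => ha ?_, by rw [hb]; exact Set.union_univ _⟩
      rw [e]; exact hb
    · intro _; trivial
  · simp only [toF, dif_neg ha, dif_neg hb]
    constructor
    · rintro ⟨hne, hcone⟩
      refine ⟨fun e => hne ?_, (cone_iff B lo hlo _ _).mp hcone⟩
      subst e; rfl
    · rintro ⟨hne, hun⟩
      refine ⟨fun e => hne ?_, (cone_iff B lo hlo _ _).mpr hun⟩
      have h1 := congrArg Subtype.val e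
      have h2 := Option.some.inj (Option.some.inj h1)
      have hv : a.1 = b.1 := congrArg (fun s : Lmid B => s.1) h2
      exact Subtype.ext hv
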